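/- arXiv:1304.3042 — 2 statements merged into one kernel-verified Lean document; each statement's English description precedes it below -/
import Mathlib

section
/- Assume I = [a,b] ⊆ ℝ. For a function f : Iⁿ → ℝ the following are equivalent: (i) f is comonotonic maxitive; (ii) there are nondecreasing unary functions φ_S : I → ℝ (S ⊆ X) such that f(x) = ⋁_{S⊆X} φ_S(⋀_{i∈S} x_i) for all x ∈ Iⁿ (with ⋀_{i∈∅} x_i = b), and one may take φ_S(x) = f(e_S ∧ x); (iii) for every permutation σ of X there are nondecreasing functions f^σ_i : I → ℝ (i = 1,…,n) such that f(x) = ⋁_{i=1}^n f^σ_i(x_{σ(i)}) for every x ∈ Iⁿ_σ, and one may take f^σ_i(x) = f(e_{S↑_σ(i)} ∧ x). -/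
/-- `S↑_σ(i)` (0-indexed): the set `{σ(i), σ(i+1), …, σ(n-1)}`.  For `i = n` it is empty. -/
def SUp {n : ℕ} (σ : Equiv.Perm (Fin n)) (i : ℕ) : Finset (Fin n) :=
  (Finset.univ.filter (fun j : Fin n => i ≤ (j : ℕ))).image σ

/-- `S↓_σ(i)`: the set `{σ(0), …, σ(i-1)}`.  For `i = 0` it is empty. -/
def SDown {n : ℕ} (σ : Equiv.Perm (Fin n)) (i : ℕ) : Finset (Fin n) :=
  (Finset.univ.filter (fun j : Fin n => (j : ℕ) < i)).image σ

/-- Two tuples are comonotonic if some permutation sorts both nondecreasingly. -/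
def Comonotone {n : ℕ} (x y : Fin n → ℝ) : Prop :=
  ∃ σ : Equiv.Perm (Fin n), Monotone (x ∘ σ) ∧ Monotone (y ∘ σ)

/-- The tuple `r·1_S`. -/
def indTuple {n : ℕ} (S : Finset (Fin n)) (r : ℝ) : Fin n → ℝ :=
  fun j => if j ∈ S then r else 0

/-- The signed Choquet integral of `x` w.r.t. `v`, computed via a sorting permutation. -/
noncomputable def Cv {n : ℕ} (v : Finset (Fin n) → ℝ) (x : Fin n → ℝ) : ℝ :=
  ∑ i : Fin n,
    x (Tuple.sort x i) *
      (v (SUp (Tuple.sort x) (i : ℕ)) - v (SUp (Tuple.sort x) ((i : ℕ) + 1)))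

/-- `f` is the restriction to `Iⁿ` of a signed Choquet integral. -/
def IsSignedChoquetOn {n : ℕ} (I : Set ℝ) (f : (Fin n → ℝ) → ℝ) : Prop :=
  ∃ v : Finset (Fin n) → ℝ, v ∅ = 0 ∧
    ∀ σ : Equiv.Perm (Fin n), ∀ x : Fin n → ℝ, (∀ i, x i ∈ I) → Monotone (x ∘ σ) →
      f x = ∑ i : Fin n, x (σ i) * (v (SUp σ (i : ℕ)) - v (SUp σ ((i : ℕ) + 1)))

/-- `f` is the restriction to `Iⁿ` of a symmetric signed Choquet integral
`Č_v(x) = C_v(x⁺) - C_v(x⁻)`. -/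
def IsSymSignedChoquetOn {n : ℕ} (I : Set ℝ) (f : (Fin n → ℝ) → ℝ) : Prop :=
  ∃ v : Finset (Fin n) → ℝ, v ∅ = 0 ∧
    ∀ x : Fin n → ℝ, (∀ i, x i ∈ I) →
      f x = Cv v (fun i => max (x i) 0) - Cv v (fun i => max (-x i) 0)

/-- Comonotonic modularity (on tuples with entries in `D`). -/
def ComonModularOn {n : ℕ} (D : Set ℝ) (f : (Fin n → ℝ) → ℝ) : Prop :=
  ∀ x y : Fin n → ℝ, (∀ i, x i ∈ D) → (∀ i, y i ∈ D) → Comonotone x y →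
    f x + f y = f (fun i => min (x i) (y i)) + f (fun i => max (x i) (y i))

/-- Comonotonic additivity (on tuples with entries in `D`). -/
def ComonAdditiveOn {n : ℕ} (D : Set ℝ) (f : (Fin n → ℝ) → ℝ) : Prop :=
  ∀ x y : Fin n → ℝ, (∀ i, x i ∈ D) → (∀ i, y i ∈ D) → Comonotone x y →
    (∀ i, x i + y i ∈ D) → f (fun i => x i + y i) = f x + f y

/-- Comonotonic maxitivity. -/
def ComonMaxitiveOn {n : ℕ} (D : Set ℝ) (f : (Fin n → ℝ) → ℝ) : Prop :=
  ∀ x y : Fin n → ℝ, (∀ i, x i ∈ D) → (∀ i, y i ∈ D) → Comonotone x y →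
    f (fun i => max (x i) (y i)) = max (f x) (f y)

/-- Comonotonic minitivity. -/
def ComonMinitiveOn {n : ℕ} (D : Set ℝ) (f : (Fin n → ℝ) → ℝ) : Prop :=
  ∀ x y : Fin n → ℝ, (∀ i, x i ∈ D) → (∀ i, y i ∈ D) → Comonotone x y →
    f (fun i => min (x i) (y i)) = min (f x) (f y)

/-- Horizontal min-additivity. -/
def HorizMinAdditiveOn {n : ℕ} (D : Set ℝ) (f : (Fin n → ℝ) → ℝ) : Prop :=
  ∀ x : Fin n → ℝ, (∀ i, x i ∈ D) → ∀ c ∈ D, (∀ i, x i - min (x i) c ∈ D) →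
    f x = f (fun i => min (x i) c) + f (fun i => x i - min (x i) c)

/-- Horizontal max-additivity. -/
def HorizMaxAdditiveOn {n : ℕ} (D : Set ℝ) (f : (Fin n → ℝ) → ℝ) : Prop :=
  ∀ x : Fin n → ℝ, (∀ i, x i ∈ D) → ∀ c ∈ D, (∀ i, x i - max (x i) c ∈ D) →
    f x = f (fun i => max (x i) c) + f (fun i => x i - max (x i) c)

/-- Horizontal median-additivity (for `I` centered at `0`). -/
def HorizMedAdditiveOn {n : ℕ} (I : Set ℝ) (f : (Fin n → ℝ) → ℝ) : Prop :=
  ∀ x : Fin n → ℝ, (∀ i, x i ∈ I) → ∀ c ∈ I, 0 ≤ c →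
    f x = f (fun i => max (-c) (min (x i) c)) + f (fun i => x i - min (x i) c)
        + f (fun i => x i - max (x i) (-c))

/-- Invariance under horizontal min-differences (for domains of nonnegative tuples). -/
def InvHMinDiffOn {n : ℕ} (D : Set ℝ) (f : (Fin n → ℝ) → ℝ) : Prop :=
  ∀ x : Fin n → ℝ, (∀ i, x i ∈ D) → ∀ c ∈ D,
    f x - f (fun i => min (x i) c) =
      f (fun i => if x i ≤ c then 0 else x i) -
        f (fun i => min (if x i ≤ c then 0 else x i) c)

/-- Invariance under horizontal max-differences (for domains of nonpositive tuples). -/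
def InvHMaxDiffOn {n : ℕ} (D : Set ℝ) (f : (Fin n → ℝ) → ℝ) : Prop :=
  ∀ x : Fin n → ℝ, (∀ i, x i ∈ D) → ∀ c ∈ D,
    f x - f (fun i => max (x i) c) =
      f (fun i => if c ≤ x i then 0 else x i) -
        f (fun i => max (if c ≤ x i then 0 else x i) c)

/-- `⋀_{i ∈ S} x i`, with the convention that the empty infimum is `b`. -/
noncomputable def infWith {n : ℕ} (b : ℝ) (S : Finset (Fin n)) (x : Fin n → ℝ) : ℝ :=
  if h : S.Nonempty then S.inf' h x else b

/-- An `[a,b]`-valued capacity. -/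
def IsCapacityOn {n : ℕ} (a b : ℝ) (μ : Finset (Fin n) → ℝ) : Prop :=
  μ ∅ = a ∧ μ Finset.univ = b ∧ ∀ S T : Finset (Fin n), S ⊆ T → μ S ≤ μ T

/-- `f` is nondecreasing (in each argument) on tuples with entries in `D`. -/
def NondecreasingOn {n : ℕ} (D : Set ℝ) (f : (Fin n → ℝ) → ℝ) : Prop :=
  ∀ x y : Fin n → ℝ, (∀ i, x i ∈ D) → (∀ i, y i ∈ D) → (∀ i, x i ≤ y i) → f x ≤ f y

/-!
If `x ∘ σ` is monotone, then `x` is the pointwise maximum of the tuples `e_{S↑_σ(i)} ∧ x_{σ(i)}`,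
all of which are sorted by `σ` and hence pairwise comonotonic, so comonotonic maxitivity splits
`f x` into the maximum of their values. Every other `e_S ∧ ⋀_{i ∈ S} x_i` lies comonotonically
below one of them (take `i` to be the first position of `S` along `σ`), so adding these terms
does not change the maximum. Conversely, both representations are preserved by maxima of
comonotonic tuples, because `⋀_{i ∈ S}` commutes with `∨` on tuples sorted by a common `σ`.
-/

open Finset

namespace Finset

lemma sup'_sup {ι α : Type*} [SemilatticeSup α] {s : Finset ι} (hs : s.Nonempty) (f g : ι → α) :
    s.sup' hs (f ⊔ g) = s.sup' hs f ⊔ s.sup' hs g :=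
  le_antisymm (sup'_le _ _ fun _ hi => sup_le_sup (le_sup' f hi) (le_sup' g hi))
    (sup_le (sup'_mono_fun fun _ _ => le_sup_left) (sup'_mono_fun fun _ _ => le_sup_right))

lemma sup'_map_max {ι α β : Type*} [LinearOrder α] [LinearOrder β] {s : Finset ι}
    (hs : s.Nonempty) {D : Set α} {g : ι → α → β} (hg : ∀ i, MonotoneOn (g i) D) {u v : ι → α}
    (hu : ∀ i, u i ∈ D) (hv : ∀ i, v i ∈ D) :
    s.sup' hs (fun i => g i (max (u i) (v i))) =
      max (s.sup' hs fun i => g i (u i)) (s.sup' hs fun i => g i (v i)) := by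
  rw [← sup'_sup]
  exact sup'_congr hs rfl fun i _ => (hg i).map_max (hu i) (hv i)

end Finset

section SortedTuples

variable {n : ℕ}

lemma comonotone_comp {w : Fin n → ℝ} {g h : ℝ → ℝ} (hg : Monotone g) (hh : Monotone h) :
    Comonotone (g ∘ w) (h ∘ w) :=
  ⟨Tuple.sort w, hg.comp (Tuple.monotone_sort w), hh.comp (Tuple.monotone_sort w)⟩

lemma mem_SUp (σ : Equiv.Perm (Fin n)) (i : ℕ) (j : Fin n) :
    j ∈ SUp σ i ↔ i ≤ (σ.symm j : ℕ) := by
  simp only [SUp, mem_image, mem_filter, mem_univ, true_and]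
  exact ⟨fun ⟨k, hk, hkj⟩ => hkj ▸ by simpa using hk, fun h => ⟨σ.symm j, h, σ.apply_symm_apply j⟩⟩

lemma exists_subset_SUp (σ : Equiv.Perm (Fin n)) {S : Finset (Fin n)} (hS : S.Nonempty) :
    ∃ k : Fin n, σ k ∈ S ∧ S ⊆ SUp σ k := by
  obtain ⟨j, hj, hmin⟩ := S.exists_min_image σ.symm hS
  exact ⟨σ.symm j, by simpa using hj, fun m hm => (mem_SUp σ _ m).2 (hmin m hm)⟩

lemma infWith_eq_of_subset_SUp {b : ℝ} {σ : Equiv.Perm (Fin n)} {x : Fin n → ℝ}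
    (hx : Monotone (x ∘ σ)) {S : Finset (Fin n)} {k : Fin n} (hk : σ k ∈ S)
    (hS : S ⊆ SUp σ k) : infWith b S x = x (σ k) := by
  rw [infWith, dif_pos ⟨_, hk⟩]
  refine le_antisymm (inf'_le x hk) (le_inf' _ _ fun j hj => ?_)
  simpa using hx (Fin.le_def.2 ((mem_SUp σ k j).1 (hS hj)))

lemma infWith_SUp {b : ℝ} {σ : Equiv.Perm (Fin n)} {x : Fin n → ℝ} (hx : Monotone (x ∘ σ))
    (i : Fin n) : infWith b (SUp σ i) x = x (σ i) :=
  infWith_eq_of_subset_SUp hx ((mem_SUp σ i _).2 (by simp)) subset_rfl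

lemma infWith_max {b : ℝ} {σ : Equiv.Perm (Fin n)} {x y : Fin n → ℝ}
    (hx : Monotone (x ∘ σ)) (hy : Monotone (y ∘ σ)) (S : Finset (Fin n)) :
    infWith b S (x ⊔ y) = max (infWith b S x) (infWith b S y) := by
  obtain rfl | hS := S.eq_empty_or_nonempty
  · simp [infWith]
  obtain ⟨k, hk, hSk⟩ := exists_subset_SUp σ hS
  rw [infWith_eq_of_subset_SUp hx hk hSk, infWith_eq_of_subset_SUp hy hk hSk,
    infWith_eq_of_subset_SUp (hx.sup hy) hk hSk]
  rfl

lemma infWith_mem {a b : ℝ} (hab : a ≤ b) (S : Finset (Fin n)) {x : Fin n → ℝ}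
    (hx : ∀ i, x i ∈ Set.Icc a b) : infWith b S x ∈ Set.Icc a b := by
  rw [infWith]
  split_ifs with hS
  · obtain ⟨j, hj, hxj⟩ := S.exists_mem_eq_inf' hS x
    exact hxj ▸ hx j
  · exact ⟨hab, le_rfl⟩

end SortedTuples

section CutTuple

variable {n : ℕ} {a b r r' : ℝ}

/-- The tuple `e_S ∧ r`. -/
def cutTuple (a b : ℝ) (S : Finset (Fin n)) (r : ℝ) : Fin n → ℝ :=
  fun j => min (if j ∈ S then b else a) r

lemma cutTuple_eq (S : Finset (Fin n)) (hr : r ∈ Set.Icc a b) :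
    cutTuple a b S r = fun j => if j ∈ S then r else a := by
  funext j
  unfold cutTuple
  split_ifs
  exacts [min_eq_right hr.2, min_eq_left hr.1]

lemma cutTuple_mem (S : Finset (Fin n)) (hr : r ∈ Set.Icc a b) (j : Fin n) :
    cutTuple a b S r j ∈ Set.Icc a b := by
  simp only [cutTuple_eq S hr]
  split_ifs
  exacts [hr, ⟨le_rfl, hr.1.trans hr.2⟩]

lemma monotone_cutTuple_SUp_comp (σ : Equiv.Perm (Fin n)) (i : ℕ) (hr : r ∈ Set.Icc a b) :
    Monotone (cutTuple a b (SUp σ i) r ∘ σ) := by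
  intro k l hkl
  simp only [cutTuple_eq _ hr, Function.comp_apply, mem_SUp, Equiv.symm_apply_apply]
  split_ifs with hk hl
  · exact le_rfl
  · exact absurd (hk.trans hkl) hl
  · exact hr.1
  · exact le_rfl

lemma comonotone_cutTuple {S T : Finset (Fin n)} (hST : S ⊆ T) (hr : r ∈ Set.Icc a b)
    (hr' : r' ∈ Set.Icc a b) : Comonotone (cutTuple a b S r) (cutTuple a b T r') := by
  classical
  -- both tuples are monotone functions of the rank `2·[j ∈ S] + [j ∈ T \ S]`
  have h := comonotone_comp (w := fun j => if j ∈ S then 2 else if j ∈ T then 1 else 0)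
    (g := fun t => if 2 ≤ t then r else a) (h := fun t => if 1 ≤ t then r' else a)
    (fun s t hst => by dsimp only; split_ifs <;> linarith [hr.1])
    (fun s t hst => by dsimp only; split_ifs <;> linarith [hr'.1])
  convert h using 1 <;> funext j <;> have := @hST j <;>
    by_cases hjS : j ∈ S <;> by_cases hjT : j ∈ T <;> simp_all [cutTuple_eq]

lemma sup'_cutTuple_SUp {σ : Equiv.Perm (Fin n)} {x : Fin n → ℝ}
    (hs : (univ : Finset (Fin n)).Nonempty) (hx : ∀ i, x i ∈ Set.Icc a b)
    (hxσ : Monotone (x ∘ σ)) :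
    univ.sup' hs (fun i : Fin n => cutTuple a b (SUp σ i) (x (σ i))) = x := by
  funext j
  rw [Finset.sup'_apply]
  refine le_antisymm (sup'_le _ _ fun i _ => ?_) (le_sup'_of_le _ (mem_univ (σ.symm j)) ?_)
  · simp only [cutTuple_eq _ (hx _), mem_SUp]
    split_ifs with hij
    · simpa using hxσ (Fin.le_def.2 hij)
    · exact (hx j).1
  · simp [cutTuple_eq _ (hx _), mem_SUp]

end CutTuple

namespace ComonMaxitiveOn

variable {n : ℕ} {D : Set ℝ} {f : (Fin n → ℝ) → ℝ}

lemma le_of_comonotone (hf : ComonMaxitiveOn D f) {x y : Fin n → ℝ} (hx : ∀ i, x i ∈ D)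
    (hy : ∀ i, y i ∈ D) (hxy : Comonotone x y) (hle : x ≤ y) : f x ≤ f y := by
  have h := hf x y hx hy hxy
  rw [show (fun i => max (x i) (y i)) = y from funext fun i => max_eq_right (hle i)] at h
  exact h ▸ le_max_left _ _

lemma map_sup' (hf : ComonMaxitiveOn D f) (σ : Equiv.Perm (Fin n)) {ι : Type*}
    {s : Finset ι} (hs : s.Nonempty) (y : ι → Fin n → ℝ) (hyD : ∀ k ∈ s, ∀ j, y k j ∈ D)
    (hyσ : ∀ k ∈ s, Monotone (y k ∘ σ)) : f (s.sup' hs y) = s.sup' hs (f ∘ y) := by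
  classical
  induction hs using Finset.Nonempty.cons_induction with
  | singleton k => simp
  | cons k s hk hs ih =>
    simp only [mem_cons, forall_eq_or_imp] at hyD hyσ
    -- the sup of tuples in `D` is, coordinatewise, one of them
    have hsupD : ∀ j, s.sup' hs y j ∈ D := fun j => by
      obtain ⟨m, hm, hmj⟩ := s.exists_mem_eq_sup' hs fun m => y m j
      exact Finset.sup'_apply hs y j ▸ hmj ▸ hyD.2 m hm j
    have hsupσ : Monotone (s.sup' hs y ∘ σ) :=
      sup'_induction (p := fun g => Monotone (g ∘ σ)) hs y (fun _ hg _ hg' => hg.sup hg') hyσ.2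
    rw [sup'_cons hs, sup'_cons hs, ← ih hyD.2 hyσ.2]
    exact hf _ _ hyD.1 hsupD ⟨σ, hyσ.1, hsupσ⟩

end ComonMaxitiveOn

section Representation

variable {n : ℕ} {a b : ℝ} {f : (Fin n → ℝ) → ℝ}

lemma ComonMaxitiveOn.cutTuple_le (hf : ComonMaxitiveOn (Set.Icc a b) f)
    {S T : Finset (Fin n)} (hST : S ⊆ T) {r r' : ℝ} (hr : r ∈ Set.Icc a b)
    (hr' : r' ∈ Set.Icc a b) (hrr' : r ≤ r') : f (cutTuple a b S r) ≤ f (cutTuple a b T r') := by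
  refine hf.le_of_comonotone (cutTuple_mem S hr) (cutTuple_mem T hr')
    (comonotone_cutTuple hST hr hr') fun j => ?_
  rw [cutTuple_eq S hr, cutTuple_eq T hr']
  by_cases hjS : j ∈ S
  · simpa [hjS, hST hjS] using hrr'
  · simp only [hjS, if_false]
    split_ifs
    exacts [hr'.1, le_rfl]

lemma ComonMaxitiveOn.eq_sup'_cutTuple_SUp (hs : (univ : Finset (Fin n)).Nonempty)
    (hf : ComonMaxitiveOn (Set.Icc a b) f) (σ : Equiv.Perm (Fin n)) {x : Fin n → ℝ}
    (hx : ∀ i, x i ∈ Set.Icc a b) (hxσ : Monotone (x ∘ σ)) :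
    f x = univ.sup' hs (fun i : Fin n => f (cutTuple a b (SUp σ i) (x (σ i)))) := by
  conv_lhs => rw [← sup'_cutTuple_SUp hs hx hxσ]
  exact hf.map_sup' σ _ _ (fun i _ => cutTuple_mem _ (hx _))
    fun i _ => monotone_cutTuple_SUp_comp σ i (hx _)

lemma ComonMaxitiveOn.eq_sup'_cutTuple_infWith (hs : (univ : Finset (Fin n)).Nonempty)
    (hab : a ≤ b) (hf : ComonMaxitiveOn (Set.Icc a b) f) {x : Fin n → ℝ}
    (hx : ∀ i, x i ∈ Set.Icc a b) :
    f x = univ.sup' univ_nonempty (fun S => f (cutTuple a b S (infWith b S x))) := by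
  obtain ⟨σ, hxσ⟩ : ∃ σ : Equiv.Perm (Fin n), Monotone (x ∘ σ) := ⟨_, Tuple.monotone_sort x⟩
  have hrep := hf.eq_sup'_cutTuple_SUp hs σ hx hxσ
  refine le_antisymm ?_ (sup'_le _ _ fun S _ => ?_)
  · rw [hrep]
    exact sup'_le _ _ fun i _ =>
      le_sup'_of_le _ (mem_univ (SUp σ i)) (by rw [infWith_SUp hxσ])
  obtain rfl | hS := S.eq_empty_or_nonempty
  · have hconst : cutTuple a b (∅ : Finset (Fin n)) (infWith b ∅ x) = fun _ => a := by
      funext j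
      simp [cutTuple, infWith, hab]
    rw [hconst]
    exact hf.le_of_comonotone (fun _ => ⟨le_rfl, hab⟩) hx ⟨σ, monotone_const, hxσ⟩
      fun j => (hx j).1
  obtain ⟨k, hk, hSk⟩ := exists_subset_SUp σ hS
  rw [infWith_eq_of_subset_SUp hxσ hk hSk, hrep]
  exact (hf.cutTuple_le hSk (hx _) (hx _) le_rfl).trans
    (le_sup' (fun i : Fin n => f (cutTuple a b (SUp σ i) (x (σ i)))) (mem_univ k))

lemma comonMaxitiveOn_of_eq_sup'_infWith (hab : a ≤ b) {φ : Finset (Fin n) → ℝ → ℝ}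
    (hφ : ∀ S, MonotoneOn (φ S) (Set.Icc a b))
    (hrep : ∀ x : Fin n → ℝ, (∀ i, x i ∈ Set.Icc a b) →
      f x = univ.sup' univ_nonempty (fun S => φ S (infWith b S x))) :
    ComonMaxitiveOn (Set.Icc a b) f := by
  rintro x y hx hy ⟨σ, hxσ, hyσ⟩
  have hxy : ∀ i, max (x i) (y i) ∈ Set.Icc a b := fun i =>
    ⟨le_max_of_le_left (hx i).1, max_le (hx i).2 (hy i).2⟩
  rw [hrep _ hxy, hrep x hx, hrep y hy]
  refine (sup'_congr _ rfl fun S _ => ?_).trans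
    (sup'_map_max _ hφ (infWith_mem hab · hx) (infWith_mem hab · hy))
  exact congrArg (φ S) (infWith_max hxσ hyσ S)

lemma comonMaxitiveOn_of_forall_perm_eq_sup' (hs : (univ : Finset (Fin n)).Nonempty)
    (hrep : ∀ σ : Equiv.Perm (Fin n), ∃ g : Fin n → ℝ → ℝ,
      (∀ i, MonotoneOn (g i) (Set.Icc a b)) ∧
      ∀ x : Fin n → ℝ, (∀ i, x i ∈ Set.Icc a b) → Monotone (x ∘ σ) →
        f x = univ.sup' hs (fun i => g i (x (σ i)))) :
    ComonMaxitiveOn (Set.Icc a b) f := by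
  rintro x y hx hy ⟨σ, hxσ, hyσ⟩
  obtain ⟨g, hg, hrepσ⟩ := hrep σ
  have hxy : ∀ i, max (x i) (y i) ∈ Set.Icc a b := fun i =>
    ⟨le_max_of_le_left (hx i).1, max_le (hx i).2 (hy i).2⟩
  rw [hrepσ _ hxy (hxσ.sup hyσ), hrepσ x hx hxσ, hrepσ y hy hyσ]
  exact sup'_map_max _ hg (fun i => hx (σ i)) fun i => hy (σ i)

end Representation

theorem statement12 (n : ℕ) (hn : 0 < n) (a b : ℝ) (hab : a < b)
    (f : (Fin n → ℝ) → ℝ) :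
    (ComonMaxitiveOn (Set.Icc a b) f ↔
      ∃ φ : Finset (Fin n) → ℝ → ℝ,
        (∀ S : Finset (Fin n), ∀ y ∈ Set.Icc a b, ∀ z ∈ Set.Icc a b, y ≤ z → φ S y ≤ φ S z) ∧
        ∀ x : Fin n → ℝ, (∀ i, x i ∈ Set.Icc a b) →
          f x = Finset.sup' Finset.univ ⟨∅, Finset.mem_univ ∅⟩
            (fun S : Finset (Fin n) => φ S (infWith b S x)))
    ∧
    (ComonMaxitiveOn (Set.Icc a b) f ↔
      ∀ σ : Equiv.Perm (Fin n), ∃ g : Fin n → ℝ → ℝ,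
        (∀ i : Fin n, ∀ y ∈ Set.Icc a b, ∀ z ∈ Set.Icc a b, y ≤ z → g i y ≤ g i z) ∧
        ∀ x : Fin n → ℝ, (∀ i, x i ∈ Set.Icc a b) → Monotone (x ∘ σ) →
          f x = Finset.sup' Finset.univ ⟨⟨0, hn⟩, Finset.mem_univ _⟩
            (fun i : Fin n => g i (x (σ i))))
    ∧
    (ComonMaxitiveOn (Set.Icc a b) f →
      ∀ x : Fin n → ℝ, (∀ i, x i ∈ Set.Icc a b) →
        f x = Finset.sup' Finset.univ ⟨∅, Finset.mem_univ ∅⟩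
          (fun S : Finset (Fin n) =>
            f (fun i => min (if i ∈ S then b else a) (infWith b S x))))
    ∧
    (ComonMaxitiveOn (Set.Icc a b) f →
      ∀ σ : Equiv.Perm (Fin n), ∀ x : Fin n → ℝ,
        (∀ i, x i ∈ Set.Icc a b) → Monotone (x ∘ σ) →
        f x = Finset.sup' Finset.univ ⟨⟨0, hn⟩, Finset.mem_univ _⟩
          (fun i : Fin n =>
            f (fun j => min (if j ∈ SUp σ (i : ℕ) then b else a) (x (σ i))))) := by
  have hs : (univ : Finset (Fin n)).Nonempty := ⟨⟨0, hn⟩, mem_univ _⟩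
  have hsubsets (hf : ComonMaxitiveOn (Set.Icc a b) f) (x : Fin n → ℝ)
      (hx : ∀ i, x i ∈ Set.Icc a b) :=
    hf.eq_sup'_cutTuple_infWith hs hab.le hx
  have hperm (hf : ComonMaxitiveOn (Set.Icc a b) f) (σ : Equiv.Perm (Fin n)) (x : Fin n → ℝ)
      (hx : ∀ i, x i ∈ Set.Icc a b) (hxσ : Monotone (x ∘ σ)) :=
    hf.eq_sup'_cutTuple_SUp hs σ hx hxσ
  refine ⟨⟨fun hf => ?_, fun ⟨φ, hφ, hrep⟩ => comonMaxitiveOn_of_eq_sup'_infWith hab.le hφ hrep⟩,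
    ⟨fun hf σ => ?_, comonMaxitiveOn_of_forall_perm_eq_sup' hs⟩, hsubsets, hperm⟩
  · exact ⟨fun S r => f (cutTuple a b S r),
      fun S _ hy _ hz hyz => hf.cutTuple_le subset_rfl hy hz hyz, hsubsets hf⟩
  · exact ⟨fun i r => f (cutTuple a b (SUp σ i) r),
      fun i _ hy _ hz hyz => hf.cutTuple_le subset_rfl hy hz hyz, hperm hf σ⟩
end

section
/- Assume I is a real interval centered at 0 with [−1,1] ⊆ I. A function f : Iⁿ → ℝ is a symmetric signed Choquet integral if and only if: (i) f is comonotonically modular, and (ii) f(x·1_S) = x·f(1_S) for all x ∈ I and S ⊆ X. -/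
/-!
Along a common sorting permutation `C_v` is linear in the tuple, and `x + y = (x ⊓ y) + (x ⊔ y)`
pointwise, so `C_v`, and hence `Č_v`, is comonotonically modular; moreover
`Č_v (c • 1_S) = c * v S`. Conversely, put `v S = f (1_S)`: then `f - Č_v` is comonotonically
modular and vanishes on all `c • 1_S`, and such a function `h` vanishes on `Iⁿ`. Modularity
against the constant `0` gives `h x = h (x ⊔ 0) + h (x ⊓ 0)`, and `x ⊓ 0 = -((-x) ⊔ 0)` reduces
everything to nonnegative tuples. If `g₀ ≤ ⋯ ≤ g_{n-1}` are the sorted values of `y ≥ 0`, then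
modularity of `y ⊓ g_{k+1}` against the constant `g_k` gives
`h (y ⊓ g_{k+1}) = h (y ⊓ g_k) + h (g_k ⊔ g_{k+1} • 1_S)`, and the last, two-level, term
vanishes by modularity of `g_{k+1} • 1_S` against `g_k`.
-/

section

open Finset

variable {n : ℕ}

theorem Fin.exists_le_iff_of_upward_closed {p : Fin n → Prop} (hp : ∀ ⦃i j⦄, i ≤ j → p i → p j) :
    ∃ m ≤ n, ∀ i : Fin n, m ≤ (i : ℕ) ↔ p i := by
  classical
  have hex : ∃ m, ∀ i : Fin n, m ≤ (i : ℕ) → p i := ⟨n, fun i hi => absurd i.isLt (by omega)⟩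
  refine ⟨Nat.find hex, Nat.find_min' hex fun i hi => absurd i.isLt (by omega),
    fun i => ⟨Nat.find_spec hex i, fun hi => Nat.find_min' hex fun j hj => hp ?_ hi⟩⟩
  exact Fin.le_def.mpr hj

theorem sum_range_mul_sub_eq_zero {g D : ℕ → ℝ} {N : ℕ} (h0 : D 0 = 0) (hN : D N = 0)
    (hjump : ∀ k, (g (k + 1) - g k) * D (k + 1) = 0) :
    ∑ i ∈ range N, g i * (D i - D (i + 1)) = 0 := by
  have hpartial : ∀ M, ∑ i ∈ range (M + 1), g i * (D i - D (i + 1)) = -(g M * D (M + 1)) := by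
    intro M
    induction M with
    | zero => simp [h0]
    | succ M ih => rw [sum_range_succ, ih]; linear_combination hjump M
  cases N with
  | zero => simp
  | succ M => rw [hpartial, hN, mul_zero, neg_zero]

theorem sum_range_ite_mul_sub (c : ℝ) (A : ℕ → ℝ) {m N : ℕ} (hm : m ≤ N) :
    ∑ i ∈ range N, (if m ≤ i then c else 0) * (A i - A (i + 1)) = c * (A m - A N) := by
  induction N, hm using Nat.le_induction with
  | base => rw [sum_eq_zero fun i hi => by rw [if_neg (by simpa using hi), zero_mul]]; ring
  | succ N hmN ih => rw [sum_range_succ, ih, if_pos hmN]; ring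

theorem SUp_zero (σ : Equiv.Perm (Fin n)) : SUp σ 0 = univ := by
  simp [SUp]

theorem SUp_of_le (σ : Equiv.Perm (Fin n)) {i : ℕ} (hi : n ≤ i) : SUp σ i = ∅ := by
  simp only [SUp, image_eq_empty, filter_eq_empty_iff]
  exact fun j _ => by omega

theorem SUp_eq_of_forall_le_iff {σ : Equiv.Perm (Fin n)} {m : ℕ} {S : Finset (Fin n)}
    (h : ∀ i : Fin n, m ≤ (i : ℕ) ↔ σ i ∈ S) : SUp σ m = S := by
  ext j
  simp only [SUp, mem_image, mem_filter, mem_univ, true_and]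
  exact ⟨fun ⟨i, hi, hij⟩ => hij ▸ (h i).1 hi, fun hj => ⟨σ.symm j, (h _).2 (by simpa), by simp⟩⟩

def choquetSum (v : Finset (Fin n) → ℝ) (σ : Equiv.Perm (Fin n)) (y : Fin n → ℝ) : ℝ :=
  ∑ i : Fin n, y (σ i) * (v (SUp σ i) - v (SUp σ (i + 1)))

theorem SUp_succ_eq_filter {σ : Equiv.Perm (Fin n)} {y : Fin n → ℝ} (hσ : Monotone (y ∘ σ))
    {k : ℕ} (hk : k + 1 < n) (hlt : y (σ ⟨k, by omega⟩) < y (σ ⟨k + 1, hk⟩)) :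
    SUp σ (k + 1) = univ.filter fun j => y (σ ⟨k + 1, hk⟩) ≤ y j := by
  refine SUp_eq_of_forall_le_iff fun i => ?_
  rw [mem_filter, and_iff_right (mem_univ _)]
  refine ⟨fun hi => hσ (Fin.le_def.mpr hi), fun hi => ?_⟩
  by_contra! hik
  exact (hσ (Fin.le_def.mpr (Nat.le_of_lt_succ hik) : i ≤ ⟨k, by omega⟩)).not_gt (hlt.trans_le hi)

/-- After summation by parts the weight of `v (SUp σ k)` is `y (σ k) - y (σ (k - 1))`, and
wherever it is nonzero `SUp σ k` is the upper level set `{j | y (σ k) ≤ y j}`, whichever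
sorting permutation `σ` is used. -/
theorem choquetSum_eq_of_monotone (v : Finset (Fin n) → ℝ) {y : Fin n → ℝ}
    {σ τ : Equiv.Perm (Fin n)} (hσ : Monotone (y ∘ σ)) (hτ : Monotone (y ∘ τ)) :
    choquetSum v σ y = choquetSum v τ y := by
  have hστ : ∀ i, y (σ i) = y (τ i) := congrFun (Tuple.unique_monotone hσ hτ)
  set g : ℕ → ℝ := fun k => if h : k < n then y (σ ⟨k, h⟩) else 0
  set D : ℕ → ℝ := fun k => v (SUp σ k) - v (SUp τ k)
  have hD : ∀ {k}, n ≤ k → D k = 0 := fun hk => by simp [D, SUp_of_le _ hk]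
  suffices ∑ i ∈ range n, g i * (D i - D (i + 1)) = 0 by
    rw [← sub_eq_zero, choquetSum, choquetSum, ← sum_sub_distrib, ← this,
      ← Fin.sum_univ_eq_sum_range (fun i => g i * (D i - D (i + 1)))]
    refine sum_congr rfl fun i _ => ?_
    simp only [g, D, dif_pos i.isLt, ← hστ]
    ring
  refine sum_range_mul_sub_eq_zero (by simp [D, SUp_zero]) (hD le_rfl) fun k => ?_
  by_cases hk : k + 1 < n
  · rcases (hσ (Fin.le_def.mpr k.le_succ : (⟨k, by omega⟩ : Fin n) ≤ ⟨k + 1, hk⟩)).eq_or_lt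
      with heq | hlt
    · simp only [Function.comp_apply] at heq
      simp [g, hk, show k < n by omega, heq]
    · have hlt' := hlt
      simp only [Function.comp_apply, hστ] at hlt'
      simp [D, SUp_succ_eq_filter hσ hk hlt, SUp_succ_eq_filter hτ hk hlt', hστ]
  · rw [hD (by omega), mul_zero]

theorem Cv_eq_choquetSum (v : Finset (Fin n) → ℝ) {y : Fin n → ℝ} {σ : Equiv.Perm (Fin n)}
    (hσ : Monotone (y ∘ σ)) : Cv v y = choquetSum v σ y :=
  choquetSum_eq_of_monotone v (Tuple.monotone_sort y) hσ

theorem Cv_add_Cv_of_comonotone (v : Finset (Fin n) → ℝ) {x y : Fin n → ℝ} (h : Comonotone x y) :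
    Cv v x + Cv v y = Cv v (fun i => min (x i) (y i)) + Cv v (fun i => max (x i) (y i)) := by
  obtain ⟨σ, hx, hy⟩ := h
  have hmin : Monotone ((fun i => min (x i) (y i)) ∘ σ) := hx.min hy
  have hmax : Monotone ((fun i => max (x i) (y i)) ∘ σ) := hx.max hy
  rw [Cv_eq_choquetSum v hx, Cv_eq_choquetSum v hy, Cv_eq_choquetSum v hmin,
    Cv_eq_choquetSum v hmax, choquetSum, choquetSum, choquetSum, choquetSum,
    ← sum_add_distrib, ← sum_add_distrib]
  refine sum_congr rfl fun i _ => ?_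
  rw [← add_mul, ← add_mul, min_add_max]

theorem Cv_indTuple {v : Finset (Fin n) → ℝ} (hv : v ∅ = 0) (S : Finset (Fin n)) {c : ℝ}
    (hc : 0 ≤ c) : Cv v (indTuple S c) = c * v S := by
  rcases hc.eq_or_lt with rfl | hc
  · simp [Cv, indTuple]
  set σ := Tuple.sort (indTuple S c)
  have hσ : Monotone (indTuple S c ∘ σ) := Tuple.monotone_sort _
  obtain ⟨m, hmn, hm⟩ : ∃ m ≤ n, ∀ i : Fin n, m ≤ (i : ℕ) ↔ σ i ∈ S := by
    refine Fin.exists_le_iff_of_upward_closed fun i j hij hi => ?_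
    by_contra hj
    have := hσ hij
    simp [indTuple, hi, hj] at this
    linarith
  have hval : ∀ i : Fin n, indTuple S c (σ i) = if m ≤ (i : ℕ) then c else 0 := fun i => by
    simp only [indTuple, hm]
  calc Cv v (indTuple S c)
      = ∑ i ∈ range n, (if m ≤ i then c else 0) * (v (SUp σ i) - v (SUp σ (i + 1))) := by
        rw [← Fin.sum_univ_eq_sum_range]
        exact sum_congr rfl fun i _ => by rw [← hval]
    _ = c * (v (SUp σ m) - v (SUp σ n)) := sum_range_ite_mul_sub c _ hmn
    _ = c * v S := by rw [SUp_eq_of_forall_le_iff hm, SUp_of_le σ le_rfl, hv, sub_zero]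

theorem comonotone_const (x : Fin n → ℝ) (c : ℝ) : Comonotone x fun _ => c :=
  ⟨Tuple.sort x, Tuple.monotone_sort x, monotone_const⟩

theorem Comonotone.comp_monotone {x y : Fin n → ℝ} (h : Comonotone x y) {φ : ℝ → ℝ}
    (hφ : Monotone φ) : Comonotone (fun i => φ (x i)) (fun i => φ (y i)) :=
  let ⟨σ, hx, hy⟩ := h
  ⟨σ, hφ.comp hx, hφ.comp hy⟩

theorem Comonotone.neg {x y : Fin n → ℝ} (h : Comonotone x y) : Comonotone (-x) (-y) := by
  obtain ⟨σ, hx, hy⟩ := h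
  refine ⟨Fin.revPerm.trans σ, fun i j hij => ?_, fun i j hij => ?_⟩ <;>
    simp only [Function.comp_apply, Equiv.trans_apply, Fin.revPerm_apply, Pi.neg_apply,
      neg_le_neg_iff]
  exacts [hx (Fin.rev_le_rev.mpr hij), hy (Fin.rev_le_rev.mpr hij)]

theorem indTuple_univ (c : ℝ) : indTuple (univ : Finset (Fin n)) c = fun _ => c := by
  funext i
  simp [indTuple]

theorem indTuple_mem {I : Set ℝ} (h0 : (0 : ℝ) ∈ I) (S : Finset (Fin n)) {c : ℝ} (hc : c ∈ I)
    (i : Fin n) : indTuple S c i ∈ I := by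
  unfold indTuple; split_ifs <;> assumption

noncomputable def symmCv (v : Finset (Fin n) → ℝ) (x : Fin n → ℝ) : ℝ :=
  Cv v (fun i => max (x i) 0) - Cv v (fun i => max (-x i) 0)

theorem symmCv_indTuple {v : Finset (Fin n) → ℝ} (hv : v ∅ = 0) (S : Finset (Fin n)) (c : ℝ) :
    symmCv v (indTuple S c) = c * v S := by
  have hpos : ∀ t : ℝ, (fun i => max (indTuple S t i) 0) = indTuple S (max t 0) := fun t => by
    ext i; unfold indTuple; split_ifs <;> simp
  have hneg : (fun i => max (-indTuple S c i) 0) = indTuple S (max (-c) 0) := by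
    rw [← hpos]; ext i; unfold indTuple; split_ifs <;> simp
  rw [symmCv, hpos, hneg, Cv_indTuple hv S (le_max_right _ _), Cv_indTuple hv S (le_max_right _ _),
    ← sub_mul, max_zero_sub_max_neg_zero_eq_self]

theorem symmCv_comonModularOn (v : Finset (Fin n) → ℝ) (D : Set ℝ) :
    ComonModularOn D (symmCv v) := by
  intro x y _ _ hxy
  have hmax : ∀ a b : ℝ, max (max a b) 0 = max (max a 0) (max b 0) := fun a b => by
    rw [max_max_max_comm, max_self]
  have hpos := Cv_add_Cv_of_comonotone v (hxy.comp_monotone fun a b h => max_le_max_right 0 h)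
  have hneg := Cv_add_Cv_of_comonotone v (hxy.neg.comp_monotone fun a b h => max_le_max_right 0 h)
  simp only [Pi.neg_apply] at hneg
  simp only [symmCv, ← max_neg_neg, ← min_neg_neg, max_min_distrib_right, hmax]
  linarith

section Uniqueness

variable {I : Set ℝ}

theorem ComonModularOn.sub {f g : (Fin n → ℝ) → ℝ} (hf : ComonModularOn I f)
    (hg : ComonModularOn I g) : ComonModularOn I (f - g) := fun x y hx hy hxy => by
  simp only [Pi.sub_apply]
  linarith [hf x y hx hy hxy, hg x y hx hy hxy]

theorem ComonModularOn.congr {f g : (Fin n → ℝ) → ℝ} (hg : ComonModularOn I g)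
    (hfg : ∀ x : Fin n → ℝ, (∀ i, x i ∈ I) → f x = g x) : ComonModularOn I f :=
  fun x y hx hy hxy => by
    rw [hfg x hx, hfg y hy, hfg _ fun i => min_rec' (· ∈ I) (hx i) (hy i),
      hfg _ fun i => max_rec' (· ∈ I) (hx i) (hy i)]
    exact hg x y hx hy hxy

theorem ComonModularOn.comp_neg {f : (Fin n → ℝ) → ℝ} (hsymm : ∀ x ∈ I, -x ∈ I)
    (hf : ComonModularOn I f) : ComonModularOn I fun x => f (-x) := fun x y hx hy hxy => by
  have := hf (-x) (-y) (fun i => hsymm _ (hx i)) (fun i => hsymm _ (hy i)) hxy.neg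
  simp only [Pi.neg_def, min_neg_neg, max_neg_neg] at this ⊢
  linarith

variable (h0 : (0 : ℝ) ∈ I) {h : (Fin n → ℝ) → ℝ} (hmod : ComonModularOn I h)
  (hvanish : ∀ c ∈ I, 0 ≤ c → ∀ S : Finset (Fin n), h (indTuple S c) = 0)
include h0 hmod hvanish

theorem ComonModularOn.max_indTuple_eq_zero {s t : ℝ} (hs : s ∈ I) (ht : t ∈ I) (hs0 : 0 ≤ s)
    (hst : s ≤ t) (S : Finset (Fin n)) : h (fun i => max (indTuple S t i) s) = 0 := by
  have hS := hmod _ _ (indTuple_mem h0 S ht) (fun _ => hs) (comonotone_const _ s)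
  have hmin : (fun i => min (indTuple S t i) s) = indTuple S s := by
    ext i; unfold indTuple; split_ifs <;> simp [hst, hs0]
  rw [hmin, ← indTuple_univ, hvanish t ht (hs0.trans hst), hvanish s hs hs0,
    hvanish s hs hs0] at hS
  linarith

theorem ComonModularOn.min_eq_min_of_gap {y : Fin n → ℝ} (hy : ∀ i, y i ∈ I) {s t : ℝ}
    (hs : s ∈ I) (ht : t ∈ I) (hs0 : 0 ≤ s) (hst : s ≤ t) (hgap : ∀ i, y i ≤ s ∨ t ≤ y i) :
    h (fun i => min (y i) t) = h (fun i => min (y i) s) := by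
  have hmodt := hmod _ _ (fun i => min_rec' (· ∈ I) (hy i) ht) (fun _ => hs)
    (comonotone_const _ s)
  have hmax : (fun i => max (min (y i) t) s) =
      fun i => max (indTuple (univ.filter (t ≤ y ·)) t i) s := by
    ext i
    rcases hgap i with hi | hi
    · rw [max_eq_right ((min_le_left _ _).trans hi)]
      simp only [indTuple, mem_filter, mem_univ, true_and]
      split_ifs with hti
      exacts [(max_eq_right (hti.trans hi)).symm, (max_eq_right hs0).symm]
    · simp [indTuple, hi]
  have hmin : (fun i => min (min (y i) t) s) = fun i => min (y i) s := by
    ext i; rw [min_assoc, min_eq_right hst]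
  rw [hmax, hmin, ← indTuple_univ, hvanish s hs hs0,
    hmod.max_indTuple_eq_zero h0 hvanish hs ht hs0 hst] at hmodt
  linarith

theorem ComonModularOn.eq_zero_of_nonneg {y : Fin n → ℝ} (hy : ∀ i, y i ∈ I)
    (hy0 : ∀ i, 0 ≤ y i) : h y = 0 := by
  cases n with
  | zero =>
    rw [Subsingleton.elim y (indTuple univ 0)]
    exact hvanish 0 h0 le_rfl univ
  | succ m =>
    set σ := Tuple.sort y
    set g := y ∘ σ
    have hg : Monotone g := Tuple.monotone_sort y
    have hyg : ∀ i, y i = g (σ.symm i) := fun i => by simp [g]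
    have hk : ∀ k : Fin (m + 1), h (fun i => min (y i) (g k)) = 0 := by
      refine Fin.induction ?_ fun k ih => ?_
      · have hmin : (fun i => min (y i) (g 0)) = indTuple univ (g 0) := by
          rw [indTuple_univ]
          exact funext fun i => min_eq_right (hyg i ▸ hg (Fin.zero_le _))
        rw [hmin]
        exact hvanish _ (hy _) (hy0 _) univ
      · refine (hmod.min_eq_min_of_gap h0 hvanish hy (hy _) (hy _) (hy0 _)
          (hg (Fin.castSucc_le_succ k)) fun i => ?_).trans ih
        rw [hyg i]
        rcases le_or_gt (σ.symm i) k.castSucc with hle | hlt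
        exacts [Or.inl (hg hle), Or.inr (hg (Fin.castSucc_lt_iff_succ_le.mp hlt))]
    have hlast : y = fun i => min (y i) (g (Fin.last m)) :=
      funext fun i => (min_eq_left (hyg i ▸ hg (Fin.le_last _))).symm
    rw [hlast]
    exact hk _

end Uniqueness

theorem neg_indTuple (S : Finset (Fin n)) (c : ℝ) : -indTuple S c = indTuple S (-c) := by
  ext i
  simp only [Pi.neg_apply, indTuple]
  split_ifs <;> simp

theorem ComonModularOn.eq_zero {I : Set ℝ} (h0 : (0 : ℝ) ∈ I) (hsymm : ∀ x ∈ I, -x ∈ I)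
    {h : (Fin n → ℝ) → ℝ} (hmod : ComonModularOn I h)
    (hvanish : ∀ c ∈ I, ∀ S : Finset (Fin n), h (indTuple S c) = 0) {y : Fin n → ℝ}
    (hy : ∀ i, y i ∈ I) : h y = 0 := by
  have hzero : h (fun _ => 0) = 0 := by rw [← indTuple_univ]; exact hvanish 0 h0 univ
  have hpos : h (fun i => max (y i) 0) = 0 :=
    hmod.eq_zero_of_nonneg h0 (fun c hc _ S => hvanish c hc S) (fun i => max_rec' _ (hy i) h0)
      fun i => le_max_right _ _
  have hneg : h (fun i => min (y i) 0) = 0 := by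
    have hnonpos : (fun i => min (y i) 0) = -fun i => max (-y i) 0 := by
      ext i; simp [← min_neg_neg]
    rw [hnonpos]
    refine (hmod.comp_neg hsymm).eq_zero_of_nonneg h0 (fun c hc _ S => ?_)
      (fun i => max_rec' _ (hsymm _ (hy i)) h0) fun i => le_max_right _ _
    rw [neg_indTuple]
    exact hvanish _ (hsymm c hc) S
  have hsplit := hmod y (fun _ => 0) hy (fun _ => h0) (comonotone_const y 0)
  rw [hzero, hpos, hneg] at hsplit
  linarith

end

theorem statement14_general (n : ℕ) (I : Set ℝ)
    (hsymm : ∀ x : ℝ, x ∈ I → -x ∈ I) (h11 : Set.Icc (-1 : ℝ) 1 ⊆ I)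
    (f : (Fin n → ℝ) → ℝ) :
    IsSymSignedChoquetOn I f ↔
      (ComonModularOn I f ∧
        ∀ x ∈ I, ∀ S : Finset (Fin n), f (indTuple S x) = x * f (indTuple S 1)) := by
  have h0 : (0 : ℝ) ∈ I := h11 ⟨by norm_num, by norm_num⟩
  have h1 : (1 : ℝ) ∈ I := h11 ⟨by norm_num, by norm_num⟩
  constructor
  · rintro ⟨v, hv, hf⟩
    have hind : ∀ c ∈ I, ∀ S, f (indTuple S c) = c * v S := fun c hc S => by
      rw [hf _ (indTuple_mem h0 S hc), ← symmCv, symmCv_indTuple hv]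
    refine ⟨(symmCv_comonModularOn v I).congr hf, fun c hc S => ?_⟩
    rw [hind c hc, hind 1 h1, one_mul]
  · rintro ⟨hmod, hhom⟩
    set v : Finset (Fin n) → ℝ := fun S => f (indTuple S 1)
    have hv : v ∅ = 0 := by
      have hempty : indTuple (∅ : Finset (Fin n)) 1 = indTuple ∅ 0 := by
        funext i; simp [indTuple]
      show f (indTuple ∅ 1) = 0
      rw [hempty, hhom 0 h0, zero_mul]
    refine ⟨v, hv, fun x hx => ?_⟩
    rw [← sub_eq_zero, ← symmCv]
    refine (hmod.sub (symmCv_comonModularOn v I)).eq_zero h0 hsymm (fun c hc S => ?_) hx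
    rw [Pi.sub_apply, hhom c hc S, symmCv_indTuple hv, sub_self]

theorem statement14 (n : ℕ) (hn : 0 < n) (I : Set ℝ) (hI : I.OrdConnected)
    (hsymm : ∀ x : ℝ, x ∈ I → -x ∈ I) (h11 : Set.Icc (-1 : ℝ) 1 ⊆ I)
    (f : (Fin n → ℝ) → ℝ) :
    IsSymSignedChoquetOn I f ↔
      (ComonModularOn I f ∧
        ∀ x ∈ I, ∀ S : Finset (Fin n), f (indTuple S x) = x * f (indTuple S 1)) :=
  statement14_general n I hsymm h11 f
end
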